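/- Assume h ≥ 0, r − c > 0, θ + c > 0, and −1 < w ≤ 0, and suppose the common demand distribution has a continuous density f_D with f_D(t) > 0 for all t ≥ 0 (so its CDF F_D is continuous, vanishes on (−∞, 0], is strictly increasing on [0, ∞), and tends to 1). For each initial inventory vector x let F_x(z) = P(D^m(x) ≤ z). Then: (i) for every x there is a unique q(x) ≥ 0 satisfying (θ + c) F_x(q(x)) = (h + r − c)(1 − F_D(q(x))) − h − (θ + c) w; (ii) q(0) ≤ q(x) and F_0(q(0)) ≥ F_x(q(x)) for every x, where 0 denotes the zero initial inventory vector; and (iii) if x_i ≥ y_i for every i then q(x) ≥ q(y) and F_x(q(x)) ≤ F_y(q(y)). -/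

import Mathlib

open MeasureTheory ProbabilityTheory

/-- The effective-demand recursion: `e 1 = d 1` and
`e (i+1) = max (e i) (s i) + d (i+1)`, where `s i = x 1 + ⋯ + x i`. -/
noncomputable def effDemand (d x : ℕ → ℝ) : ℕ → ℝ
  | 0 => 0
  | 1 => d 1
  | (n + 2) => max (effDemand d x (n + 1)) (∑ j ∈ Finset.Icc 1 (n + 1), x j) + d (n + 2)

/-- The CDF of the m-period effective demand: F_x(z) = P(D^m(x) ≤ z). -/
noncomputable def cdfEff {Ω : Type*} [MeasurableSpace Ω] (μ : Measure Ω)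
    (D : ℕ → Ω → ℝ) (x : ℕ → ℝ) (m : ℕ) (z : ℝ) : ℝ :=
  (μ {ω | effDemand (fun j => D j ω) x m ≤ z}).toReal

/-!
With `F_x` the CDF of the effective demand and `F_D` that of one period's demand, the
optimality condition reads `(θ + c) F_x(q) + (h + r - c) F_D(q) = r - c - (θ + c) w`.
The effective demand is a function of the earlier demands plus the independent, atomless
demand of the last period, so it is atomless and `F_x` is continuous. Hence the left-hand
side is continuous, vanishes at `0`, is strictly increasing on `[0, ∞)` because the density
of `F_D` is positive there, and tends to `(θ + c) + (h + r - c)`, which exceeds the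
right-hand side because `h ≥ 0` and `w > -1`: there is exactly one root `q(x)`.
More initial inventory raises the effective demand pathwise, so `F_x ≤ F_y` when `x ≥ y`;
this lowers the left-hand side and pushes the root up, `q(y) ≤ q(x)`, and then
`(θ + c) F_x(q(x)) = r - c - (θ + c) w - (h + r - c) F_D(q(x))` can only decrease.
-/

open Filter Topology Set

lemma existsUnique_eq_of_strictMonoOn_Ici {φ : ℝ → ℝ} {a t L : ℝ} (hφ : Continuous φ)
    (hmono : StrictMonoOn φ (Ici a)) (ha : φ a ≤ t) (hlim : Tendsto φ atTop (𝓝 L))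
    (htL : t < L) : ∃! q, a ≤ q ∧ φ q = t := by
  obtain ⟨M, hM, haM⟩ := ((hlim.eventually (lt_mem_nhds htL)).and (eventually_ge_atTop a)).exists
  obtain ⟨q, hq, hφq⟩ := intermediate_value_Icc haM hφ.continuousOn ⟨ha, hM.le⟩
  exact ⟨q, ⟨hq.1, hφq⟩, fun p ⟨hp, hφp⟩ => hmono.injOn hp hq.1 (hφp.trans hφq.symm)⟩

theorem ProbabilityTheory.continuous_cdf (ν : Measure ℝ) [IsProbabilityMeasure ν]
    [NullSingletonClass ν] : Continuous (cdf ν) := by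
  refine continuous_iff_continuousAt.2 fun x => ?_
  rw [(cdf ν).mono.continuousAt_iff_leftLim_eq_rightLim, StieltjesFunction.rightLim_eq]
  have hjump := (cdf ν).measure_singleton x
  rw [measure_cdf, measure_singleton, eq_comm, ENNReal.ofReal_eq_zero] at hjump
  exact le_antisymm ((cdf ν).mono.leftLim_le le_rfl) (by linarith)

lemma cdf_map_apply {Ω : Type*} [MeasurableSpace Ω] {μ : Measure Ω} [IsProbabilityMeasure μ]
    {X : Ω → ℝ} (hX : Measurable X) (q : ℝ) :
    cdf (μ.map X) q = (μ {ω | X ω ≤ q}).toReal := by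
  have := Measure.isProbabilityMeasure_map (μ := μ) hX.aemeasurable
  rw [cdf_eq_real, measureReal_def, Measure.map_apply hX measurableSet_Iic]
  rfl

lemma ProbabilityTheory.IndepFun.nullSingletonClass_map_add {Ω G : Type*} [MeasurableSpace Ω]
    {μ : Measure Ω} [IsFiniteMeasure μ] [AddGroup G] [MeasurableSpace G] [MeasurableAdd₂ G]
    [MeasurableSingletonClass G] {X Y : Ω → G} (hX : Measurable X) (hY : Measurable Y)
    (hXY : IndepFun X Y μ) [NullSingletonClass (μ.map Y)] :
    NullSingletonClass (μ.map fun ω => X ω + Y ω) := by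
  refine ⟨fun z => ?_⟩
  have hS : MeasurableSet {p : G × G | p.1 + p.2 = z} :=
    measurable_add (measurableSet_singleton z)
  rw [Measure.map_apply (f := fun ω => X ω + Y ω) (hX.add hY) (measurableSet_singleton z)]
  change μ ((fun ω => (X ω, Y ω)) ⁻¹' {p : G × G | p.1 + p.2 = z}) = 0
  rw [← Measure.map_apply (hX.prodMk hY) hS,
    (indepFun_iff_map_prod_eq_prod_map_map hX.aemeasurable hY.aemeasurable).1 hXY,
    Measure.prod_apply hS]
  have hfiber (a : G) : Prod.mk a ⁻¹' {p : G × G | p.1 + p.2 = z} = {-a + z} := by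
    ext b
    simp [eq_neg_add_iff_add_eq]
  simp [hfiber]

theorem ProbabilityTheory.iIndepFun.indepFun_of_measurable_iSup {Ω ι β γ : Type*}
    [MeasurableSpace Ω] {μ : Measure Ω} [mβ : MeasurableSpace β] [MeasurableSpace γ] {D : ι → Ω → β}
    (hD : ∀ i, Measurable (D i)) (hindep : iIndepFun D μ) {S : Set ι} {j : ι} (hj : j ∉ S)
    {f : Ω → γ} (hf : Measurable[⨆ i ∈ S, mβ.comap (D i)] f) : IndepFun f (D j) μ := by
  rw [IndepFun_iff_Indep]
  have hST : Disjoint S {j} := Set.disjoint_singleton_right.2 hj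
  refine indep_of_indep_of_le (indep_iSup_of_disjoint (fun i => (hD i).comap_le)
    ((iIndepFun_iff_iIndep _ _ _).1 hindep) hST) hf.comap_le ?_
  exact le_iSup₂ (f := fun i (_ : i ∈ ({j} : Set ι)) => mβ.comap (D i)) j rfl

lemma measure_le_eq_zero_of_ae_le {Ω : Type*} [MeasurableSpace Ω] {μ : Measure Ω}
    {X : Ω → ℝ} (hX : Measurable X) [NullSingletonClass (μ.map X)] {a : ℝ}
    (h : ∀ᵐ ω ∂μ, a ≤ X ω) : μ {ω | X ω ≤ a} = 0 := by
  have hIio : μ.map X (Iio a) = 0 := by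
    rw [Measure.map_apply hX measurableSet_Iio]
    exact measure_mono_null (fun ω hω => not_le.2 hω) (ae_iff.1 h)
  rw [measure_congr (Iio_ae_eq_Iic (μ := μ.map X)), Measure.map_apply hX measurableSet_Iic]
    at hIio
  exact hIio

lemma strictMonoOn_cdf_of_density {ν : Measure ℝ} [IsProbabilityMeasure ν] {f : ℝ → ℝ}
    (hf : Measurable f) (hν : ν = volume.withDensity fun t => ENNReal.ofReal (f t))
    {s : Set ℝ} (hs : s.OrdConnected) (hpos : ∀ t ∈ s, 0 < f t) : StrictMonoOn (cdf ν) s := by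
  intro a ha b hb hab
  have hIoc : ν (Ioc a b) ≠ 0 := by
    have hsub : Ioc a b ⊆ {t | ENNReal.ofReal (f t) ≠ 0} := fun t ht =>
      (ENNReal.ofReal_pos.2 (hpos t (hs.out ha hb (Ioc_subset_Icc_self ht)))).ne'
    rw [hν, Ne, withDensity_apply_eq_zero hf.ennreal_ofReal, inter_eq_right.2 hsub,
      Real.volume_Ioc, ENNReal.ofReal_eq_zero]
    linarith
  rw [← measure_cdf ν, StieltjesFunction.measure_Ioc, Ne, ENNReal.ofReal_eq_zero] at hIoc
  linarith

lemma measurable_effDemand {α : Type*} {mα : MeasurableSpace α} {g : ℕ → α → ℝ}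
    (x : ℕ → ℝ) : ∀ {n : ℕ}, (∀ j ≤ n, Measurable (g j)) →
      Measurable fun a => effDemand (fun j => g j a) x n
  | 0, _ => measurable_const
  | 1, hg => hg 1 le_rfl
  | _ + 2, hg =>
    ((measurable_effDemand x fun j hj => hg j (by omega)).max measurable_const).add (hg _ le_rfl)

lemma effDemand_mono_inventory (d : ℕ → ℝ) {x y : ℕ → ℝ} :
    ∀ {n : ℕ}, (∀ i, 1 ≤ i → i < n → y i ≤ x i) → effDemand d y n ≤ effDemand d x n
  | 0, _ | 1, _ => le_rfl
  | n + 2, hxy => by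
    simp only [effDemand]
    gcongr with i hi
    · exact effDemand_mono_inventory d fun i h1 h2 => hxy i h1 (by omega)
    · exact hxy i (Finset.mem_Icc.1 hi).1 (by grind)

lemma le_effDemand (d : ℕ → ℝ) {x : ℕ → ℝ} {n : ℕ} (hn : 1 ≤ n)
    (hx : ∀ i, 1 ≤ i → i < n → 0 ≤ x i) : d n ≤ effDemand d x n := by
  obtain ⟨k, rfl⟩ | ⟨k, rfl⟩ : n = 1 ∨ ∃ k, n = k + 2 := by
    rcases n with _ | _ | k <;> simp_all
  · rfl
  · have : 0 ≤ ∑ j ∈ Finset.Icc 1 (k + 1), x j :=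
      Finset.sum_nonneg fun j hj => hx j (Finset.mem_Icc.1 hj).1 (by grind)
    simp only [effDemand]
    linarith [le_max_right (effDemand d x (k + 1)) (∑ j ∈ Finset.Icc 1 (k + 1), x j)]

lemma measurable_iSup_comap_effDemand {Ω : Type*} {D : ℕ → Ω → ℝ} (x : ℕ → ℝ) (n : ℕ) :
    Measurable[⨆ i ∈ Iic n, MeasurableSpace.comap (D i) inferInstance]
      fun ω => effDemand (fun j => D j ω) x n :=
  measurable_effDemand x fun j hj => (comap_measurable (D j)).mono
    (le_iSup₂ (f := fun i (_ : i ∈ Iic n) => MeasurableSpace.comap (D i) inferInstance) j hj)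
    le_rfl

section EffectiveDemand

variable {Ω : Type*} [MeasurableSpace Ω] {μ : Measure Ω} {D : ℕ → Ω → ℝ}

lemma nullSingletonClass_map_effDemand [IsFiniteMeasure μ] (hD : ∀ i, Measurable (D i))
    (hindep : iIndepFun D μ) (hatom : ∀ i, NullSingletonClass (μ.map (D i))) (x : ℕ → ℝ) :
    ∀ {n : ℕ}, 1 ≤ n → NullSingletonClass (μ.map fun ω => effDemand (fun j => D j ω) x n)
  | 1, _ => hatom 1
  | n + 2, _ => by
    have hpast := (measurable_iSup_comap_effDemand (D := D) x (n + 1)).max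
      (measurable_const (a := ∑ j ∈ Finset.Icc 1 (n + 1), x j))
    have := hatom (n + 2)
    have hindep' := hindep.indepFun_of_measurable_iSup hD (j := n + 2) (by simp) hpast
    exact hindep'.nullSingletonClass_map_add
      (hpast.mono (iSup₂_le fun i _ => (hD i).comap_le) le_rfl) (hD _)

lemma cdfEff_eq_cdf [IsProbabilityMeasure μ] (hD : ∀ i, Measurable (D i)) (x : ℕ → ℝ) (m : ℕ) :
    cdfEff μ D x m = cdf (μ.map fun ω => effDemand (fun j => D j ω) x m) := by
  ext q
  exact (cdf_map_apply (measurable_effDemand x fun j _ => hD j) q).symm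

lemma continuous_cdfEff [IsProbabilityMeasure μ] (hD : ∀ i, Measurable (D i))
    (hindep : iIndepFun D μ) (hatom : ∀ i, NullSingletonClass (μ.map (D i))) (x : ℕ → ℝ)
    {m : ℕ} (hm : 1 ≤ m) : Continuous (cdfEff μ D x m) := by
  have := nullSingletonClass_map_effDemand hD hindep hatom x hm
  have := Measure.isProbabilityMeasure_map (μ := μ)
    (measurable_effDemand (g := D) x (n := m) fun j _ => hD j).aemeasurable
  rw [cdfEff_eq_cdf hD]
  exact continuous_cdf _

lemma tendsto_cdfEff_atTop [IsProbabilityMeasure μ] (hD : ∀ i, Measurable (D i))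
    (x : ℕ → ℝ) (m : ℕ) : Tendsto (cdfEff μ D x m) atTop (𝓝 1) := by
  have := Measure.isProbabilityMeasure_map (μ := μ)
    (measurable_effDemand (g := D) x (n := m) fun j _ => hD j).aemeasurable
  rw [cdfEff_eq_cdf hD]
  exact tendsto_cdf_atTop _

lemma monotone_cdfEff [IsFiniteMeasure μ] (x : ℕ → ℝ) (m : ℕ) : Monotone (cdfEff μ D x m) :=
  fun _ _ hab => ENNReal.toReal_mono (measure_ne_top _ _) (measure_mono fun _ hω => hω.trans hab)

lemma cdfEff_le_cdfEff_of_le [IsFiniteMeasure μ] {x y : ℕ → ℝ} {m : ℕ}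
    (hxy : ∀ i, 1 ≤ i → i ≤ m - 1 → y i ≤ x i) (q : ℝ) :
    cdfEff μ D x m q ≤ cdfEff μ D y m q :=
  ENNReal.toReal_mono (measure_ne_top _ _) (measure_mono fun _ hω =>
    (effDemand_mono_inventory _ fun i h1 h2 => hxy i h1 (by omega)).trans hω)

lemma cdfEff_zero {x : ℕ → ℝ} {m : ℕ} (hm : 1 ≤ m) (hx : ∀ i, 1 ≤ i → i ≤ m - 1 → 0 ≤ x i)
    (hDm : μ {ω | D m ω ≤ 0} = 0) : cdfEff μ D x m 0 = 0 := by
  have hsub : {ω | effDemand (fun j => D j ω) x m ≤ 0} ⊆ {ω | D m ω ≤ 0} := fun ω hω =>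
    (le_effDemand (fun j => D j ω) hm fun i h1 h2 => hx i h1 (by omega)).trans hω
  rw [cdfEff, measure_mono_null hsub hDm, ENNReal.toReal_zero]

end EffectiveDemand

def IsCriticalLevel (F G : ℝ → ℝ) (h r c θ w q : ℝ) : Prop :=
  0 ≤ q ∧ (θ + c) * F q = (h + r - c) * (1 - G q) - h - (θ + c) * w

section CriticalLevel

variable {F F' G : ℝ → ℝ} {h r c θ w : ℝ}

lemma isCriticalLevel_iff {q : ℝ} : IsCriticalLevel F G h r c θ w q ↔
    0 ≤ q ∧ (θ + c) * F q + (h + r - c) * G q = r - c - (θ + c) * w := by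
  unfold IsCriticalLevel
  constructor <;> rintro ⟨hq, heq⟩ <;> exact ⟨hq, by linarith⟩

lemma strictMonoOn_weightedSum (hF : Monotone F) (hG : StrictMonoOn G (Ici 0)) {a b : ℝ}
    (ha : 0 ≤ a) (hb : 0 < b) : StrictMonoOn (fun q => a * F q + b * G q) (Ici 0) :=
  fun _ hp _ hq hpq => add_lt_add_of_le_of_lt (mul_le_mul_of_nonneg_left (hF hpq.le) ha)
    (mul_lt_mul_of_pos_left (hG hp hq hpq) hb)

theorem existsUnique_isCriticalLevel (hFc : Continuous F) (hFm : Monotone F) (hF0 : F 0 = 0)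
    (hF1 : Tendsto F atTop (𝓝 1)) (hGc : Continuous G) (hGm : StrictMonoOn G (Ici 0))
    (hG0 : G 0 = 0) (hG1 : Tendsto G atTop (𝓝 1)) (hh : 0 ≤ h) (hrc : 0 < r - c)
    (hθc : 0 < θ + c) (hw1 : -1 < w) (hw2 : w ≤ 0) : ∃! q, IsCriticalLevel F G h r c θ w q := by
  simp only [isCriticalLevel_iff]
  refine existsUnique_eq_of_strictMonoOn_Ici
    ((continuous_const.mul hFc).add (continuous_const.mul hGc))
    (strictMonoOn_weightedSum hFm hGm hθc.le (by linarith))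
    ?_ ((hF1.const_mul _).add (hG1.const_mul _)) ?_
  · simp only [hF0, hG0, mul_zero, add_zero, sub_nonneg]
    nlinarith
  · nlinarith

theorem IsCriticalLevel.le_of_le {q q' : ℝ} (hq : IsCriticalLevel F G h r c θ w q)
    (hq' : IsCriticalLevel F' G h r c θ w q') (hFF' : ∀ p, F p ≤ F' p) (hF' : Monotone F')
    (hG : StrictMonoOn G (Ici 0)) (hh : 0 ≤ h) (hrc : 0 < r - c) (hθc : 0 < θ + c) :
    q' ≤ q ∧ F q ≤ F' q' := by
  rw [isCriticalLevel_iff] at hq hq'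
  have hle : q' ≤ q := by
    by_contra! hlt
    have := strictMonoOn_weightedSum hF' hG hθc.le (b := h + r - c) (by linarith) hq.1 hq'.1 hlt
    nlinarith [hFF' q]
  refine ⟨hle, le_of_mul_le_mul_left ?_ hθc⟩
  nlinarith [hG.monotoneOn hq'.1 hq.1 hle]

end CriticalLevel

/-- With h ≥ 0, r − c > 0, θ + c > 0, −1 < w ≤ 0 and iid nonnegative demands
having a continuous density f_D positive on [0, ∞): (i) for every nonnegative initial
inventory vector x there is a unique q(x) ≥ 0 satisfying
(θ + c) F_x(q(x)) = (h + r − c)(1 − F_D(q(x))) − h − (θ + c) w;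
(ii) q(0) ≤ q(x) and F_0(q(0)) ≥ F_x(q(x)) for every x; (iii) if x ≥ y componentwise
then q(x) ≥ q(y) and F_x(q(x)) ≤ F_y(q(y)). -/
theorem stmt_16 {Ω : Type*} [MeasurableSpace Ω] (μ : Measure Ω) [IsProbabilityMeasure μ]
    (m : ℕ) (hm : 1 ≤ m)
    (D : ℕ → Ω → ℝ) (hDmeas : ∀ i, Measurable (D i))
    (hindep : iIndepFun D μ)
    (hident : ∀ i, μ.map (D i) = μ.map (D 1))
    (hDnonneg : ∀ i, ∀ᵐ ω ∂μ, 0 ≤ D i ω)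
    (fD : ℝ → ℝ) (hfD_cont : Continuous fD) (hfD_pos : ∀ t, 0 ≤ t → 0 < fD t)
    (hfD : μ.map (D 1) = (volume : Measure ℝ).withDensity (fun t => ENNReal.ofReal (fD t)))
    (h r c θ w : ℝ) (hh : 0 ≤ h) (hrc : 0 < r - c) (hθc : 0 < θ + c)
    (hw1 : -1 < w) (hw2 : w ≤ 0) :
    ∃ Q : (ℕ → ℝ) → ℝ,
      -- (i) existence and uniqueness of the nonnegative solution of the optimality condition
      (∀ x : ℕ → ℝ, (∀ i, 1 ≤ i → i ≤ m - 1 → 0 ≤ x i) →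
        (0 ≤ Q x ∧
          (θ + c) * cdfEff μ D x m (Q x)
            = (h + r - c) * (1 - (μ {ω | D 1 ω ≤ Q x}).toReal) - h - (θ + c) * w ∧
          ∀ q' : ℝ, 0 ≤ q' →
            (θ + c) * cdfEff μ D x m q'
              = (h + r - c) * (1 - (μ {ω | D 1 ω ≤ q'}).toReal) - h - (θ + c) * w →
            q' = Q x)) ∧
      -- (ii) bounds relative to the zero initial inventory vector
      (∀ x : ℕ → ℝ, (∀ i, 1 ≤ i → i ≤ m - 1 → 0 ≤ x i) →
        Q (fun _ => 0) ≤ Q x ∧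
        cdfEff μ D x m (Q x) ≤ cdfEff μ D (fun _ => 0) m (Q (fun _ => 0))) ∧
      -- (iii) componentwise monotonicity
      (∀ x y : ℕ → ℝ, (∀ i, 1 ≤ i → i ≤ m - 1 → 0 ≤ x i) →
        (∀ i, 1 ≤ i → i ≤ m - 1 → 0 ≤ y i) →
        (∀ i, 1 ≤ i → i ≤ m - 1 → y i ≤ x i) →
        Q y ≤ Q x ∧ cdfEff μ D x m (Q x) ≤ cdfEff μ D y m (Q y)) := by
  let G : ℝ → ℝ := fun q => (μ {ω | D 1 ω ≤ q}).toReal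
  have hatom : ∀ i, NullSingletonClass (μ.map (D i)) := fun i => by
    rw [hident i, hfD]
    infer_instance
  have hD_nonpos : ∀ i, μ {ω | D i ω ≤ 0} = 0 := fun i =>
    have := hatom i
    measure_le_eq_zero_of_ae_le (hDmeas i) (hDnonneg i)
  have := Measure.isProbabilityMeasure_map (μ := μ) (hDmeas 1).aemeasurable
  have := hatom 1
  have hG : G = cdf (μ.map (D 1)) := funext fun q => (cdf_map_apply (hDmeas 1) q).symm
  have hGc : Continuous G := hG ▸ continuous_cdf _
  have hGm : StrictMonoOn G (Ici 0) := hG ▸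
    strictMonoOn_cdf_of_density hfD_cont.measurable hfD ordConnected_Ici hfD_pos
  have hG0 : G 0 = 0 := by simp only [G, hD_nonpos 1, ENNReal.toReal_zero]
  have hG1 : Tendsto G atTop (𝓝 1) := hG ▸ tendsto_cdf_atTop _
  have hexu (x : ℕ → ℝ) (hx : ∀ i, 1 ≤ i → i ≤ m - 1 → 0 ≤ x i) :
      ∃! q, IsCriticalLevel (cdfEff μ D x m) G h r c θ w q :=
    existsUnique_isCriticalLevel (continuous_cdfEff hDmeas hindep hatom x hm)
      (monotone_cdfEff x m) (cdfEff_zero hm hx (hD_nonpos m)) (tendsto_cdfEff_atTop hDmeas x m)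
      hGc hGm hG0 hG1 hh hrc hθc hw1 hw2
  let Q x := Classical.epsilon (IsCriticalLevel (cdfEff μ D x m) G h r c θ w)
  have hQ (x : ℕ → ℝ) (hx : ∀ i, 1 ≤ i → i ≤ m - 1 → 0 ≤ x i) :
      IsCriticalLevel (cdfEff μ D x m) G h r c θ w (Q x) :=
    Classical.epsilon_spec (hexu x hx).exists
  have hmono (x y : ℕ → ℝ) (hx : ∀ i, 1 ≤ i → i ≤ m - 1 → 0 ≤ x i)
      (hy : ∀ i, 1 ≤ i → i ≤ m - 1 → 0 ≤ y i) (hxy : ∀ i, 1 ≤ i → i ≤ m - 1 → y i ≤ x i) :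
      Q y ≤ Q x ∧ cdfEff μ D x m (Q x) ≤ cdfEff μ D y m (Q y) :=
    (hQ x hx).le_of_le (hQ y hy) (cdfEff_le_cdfEff_of_le hxy) (monotone_cdfEff y m) hGm hh hrc hθc
  refine ⟨Q, fun x hx => ⟨(hQ x hx).1, (hQ x hx).2, fun q hq heq => ?_⟩,
    fun x hx => hmono x _ hx (fun _ _ _ => le_rfl) hx, hmono⟩
  exact (hexu x hx).unique ⟨hq, heq⟩ (hQ x hx)
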